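/- Let N ≥ 10. There are no integers k₁, k₂, b with 0 ≤ k₁, 0 ≤ k₂, k₁ + k₂ = 6, and 4 ≤ b ≤ N−3 satisfying both −2N·k₁ ≡ b (mod 9N) and −2N·k₂ + b ≡ 6N (mod 9N). -/

import Mathlib

theorem stmt6_general (N k₁ b : ℤ)
    (hb₁ : 4 ≤ b) (hb₂ : b ≤ N - 3)
    (h₁ : -2 * N * k₁ ≡ b [ZMOD (9 * N)]) : False := by
  have hN : N ∣ b := (h₁.of_mul_left 9).dvd_iff.mp (Dvd.intro (-2 * k₁) (by ring))
  have hb : b = 0 := Int.eq_zero_of_dvd_of_nonneg_of_lt (by omega) (by omega) hN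
  omega

/-- for `N ≥ 10` there are no integers `k₁, k₂ ≥ 0` with
`k₁ + k₂ = 6` and `4 ≤ b ≤ N − 3` satisfying both
`−2N·k₁ ≡ b (mod 9N)` and `−2N·k₂ + b ≡ 6N (mod 9N)`. -/
theorem stmt6 (N k₁ k₂ b : ℤ) (hN : 10 ≤ N)
    (hk₁ : 0 ≤ k₁) (hk₂ : 0 ≤ k₂) (hsum : k₁ + k₂ = 6)
    (hb₁ : 4 ≤ b) (hb₂ : b ≤ N - 3)
    (h₁ : -2 * N * k₁ ≡ b [ZMOD (9 * N)])
    (h₂ : -2 * N * k₂ + b ≡ 6 * N [ZMOD (9 * N)]) : False :=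
  stmt6_general N k₁ b hb₁ hb₂ h₁
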